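/- (Theorem 1.1, part B, first case of (1.11).) Assume V_i ≥ 0 for all i ≥ 1, V_1 > 0, and H(u) < ∞ for all u ∈ [0, u_0) with u_0 > 0. Then for every sequence (x_k)_{k≥1} of positive reals with x_k/k → ∞ as k → ∞, one has ( M_k(x_k) )^{1/k} / ( x_k·V_1 ) → 1 as k → ∞. -/

import Mathlib

open scoped BigOperators ENNReal
open Filter MeasureTheory

noncomputable section

/-- The finset of tuples `(l 0, ..., l (k-1))` (representing `l_1, ..., l_k`) of nonnegative
integers with `l_1 + 2 l_2 + ⋯ + k l_k = k`. -/
def bellTuples (k : ℕ) : Finset (Fin k → ℕ) :=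
  (Fintype.piFinset fun _ => Finset.range (k + 1)).filter
    (fun l => ∑ i, (i.1 + 1) * l i = k)

/-- Weighted Bell polynomial `M_k(x)` for weights `V_1, V_2, …`. -/
def weightedBell (V : ℕ → ℝ) (k : ℕ) (x : ℝ) : ℝ :=
  (Nat.factorial k : ℝ) * ∑ l ∈ bellTuples k, ∏ i : Fin k,
    (x * V (i.1 + 1)) ^ (l i) /
      ((Nat.factorial (i.1 + 1) : ℝ) ^ (l i) * (Nat.factorial (l i) : ℝ))

/-- Exponential generating function `H(u) = 1 + ∑_{i ≥ 1} V_i u^i / i!` of the weights. -/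
def weightEGF (V : ℕ → ℝ) (u : ℝ) : ℝ :=
  1 + ∑' i : ℕ, V (i + 1) * u ^ (i + 1) / (Nat.factorial (i + 1) : ℝ)

/-- Termwise derivative `H'(u) = ∑_{i ≥ 1} V_i u^{i-1}/(i-1)!`. -/
def weightEGFDeriv (V : ℕ → ℝ) (u : ℝ) : ℝ :=
  ∑' i : ℕ, V (i + 1) * u ^ i / (Nat.factorial i : ℝ)

/-- Termwise second derivative `H''(u)`. -/
def weightEGFDeriv2 (V : ℕ → ℝ) (u : ℝ) : ℝ :=
  ∑' i : ℕ, V (i + 2) * u ^ i / (Nat.factorial i : ℝ)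

/-- `H(u) < ∞` for all `u ∈ [0, u_0)`. -/
def HFinite (V : ℕ → ℝ) (u0 : ℝ≥0∞) : Prop :=
  ∀ u : ℝ, 0 ≤ u → ENNReal.ofReal u < u0 →
    Summable (fun i : ℕ => V (i + 1) * u ^ (i + 1) / (Nat.factorial (i + 1) : ℝ))

/-!
The term `l = (k, 0, …, 0)` of the Bell sum gives `M_k(x) ≥ (x V₁)ᵏ`. Conversely `M_k(x) / k!` is
the `k`-th Taylor coefficient of `exp (x (H(u) - 1))`, a power series with nonnegative
coefficients, so `M_k(x) ≤ k! u⁻ᵏ exp (x (H(u) - 1))` for every `u > 0` where `H` is finite.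
At the saddle point `u = k / (x V₁)`, using `H(u) - 1 ≤ V₁ u + O(u²)` and Stirling's bound
`k! ≤ e k (k/e)ᵏ`, this becomes `M_k(x) ≤ (x V₁)ᵏ · e k · exp (O(k² / x))`, whose `k`-th root is
`x V₁ (1 + o(1))` once `k / x → 0`.
-/

open Real Topology

theorem sum_piFinset_prod_pow_div_factorial_le_exp {ι : Type*} [Fintype ι] [DecidableEq ι]
    {a : ι → ℝ} (ha : ∀ i, 0 ≤ a i) (n : ℕ) :
    ∑ l ∈ Fintype.piFinset (fun _ : ι => Finset.range n), ∏ i, a i ^ l i / (l i).factorial ≤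
      exp (∑ i, a i) := by
  rw [← Finset.prod_univ_sum (fun _ => Finset.range n) fun i j => a i ^ j / j.factorial,
    Real.exp_sum]
  exact Finset.prod_le_prod (fun i _ => Finset.sum_nonneg fun j _ => by have := ha i; positivity)
    fun i _ => Real.sum_le_exp_of_nonneg (ha i) n

/-- Stirling's sequence `k! / (√(2k) (k/e)ᵏ)` is antitone, so it is at most its value `e/√2` at
`k = 1`. -/
theorem factorial_le_exp_one_mul_mul_div_exp_one_pow {k : ℕ} (hk : k ≠ 0) :
    (k.factorial : ℝ) ≤ exp 1 * k * (k / exp 1) ^ k := by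
  obtain ⟨n, rfl⟩ := Nat.exists_eq_succ_of_ne_zero hk
  have h : Stirling.stirlingSeq (n + 1) ≤ exp 1 / √2 := by
    simpa using Stirling.stirlingSeq'_antitone (Nat.zero_le n)
  rw [Stirling.stirlingSeq, div_le_div_iff₀ (by positivity) (by positivity),
    Real.sqrt_mul zero_le_two] at h
  calc ((n + 1).factorial : ℝ) ≤ exp 1 * √((n + 1 : ℕ) : ℝ) * ((n + 1 : ℕ) / exp 1) ^ (n + 1) :=
        le_of_mul_le_mul_right (by linarith) (by positivity : (0 : ℝ) < √2)
    _ ≤ _ := by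
        gcongr
        exact Real.sqrt_le_self_iff.mpr (Or.inr (by simp))

theorem one_le_rpow_inv_div {a M : ℝ} {k : ℕ} (hk : k ≠ 0) (ha : 0 < a) (h : a ^ k ≤ M) :
    1 ≤ M ^ (k : ℝ)⁻¹ / a := by
  rw [one_le_div ha]
  calc a = (a ^ k) ^ (k : ℝ)⁻¹ := (pow_rpow_inv_natCast ha.le hk).symm
    _ ≤ M ^ (k : ℝ)⁻¹ := by gcongr

theorem rpow_inv_div_le {a B M : ℝ} {k : ℕ} (hk : k ≠ 0) (ha : 0 < a) (hM : 0 ≤ M)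
    (h : M ≤ a ^ k * B) : M ^ (k : ℝ)⁻¹ / a ≤ B ^ (k : ℝ)⁻¹ := by
  have hB : 0 ≤ B := nonneg_of_mul_nonneg_right (hM.trans h) (by positivity)
  rw [div_le_iff₀' ha]
  calc M ^ (k : ℝ)⁻¹ ≤ (a ^ k * B) ^ (k : ℝ)⁻¹ := by gcongr
    _ = a * B ^ (k : ℝ)⁻¹ := by rw [mul_rpow (by positivity) hB, pow_rpow_inv_natCast ha.le hk]

theorem tendsto_rpow_inv_exp_one_mul_mul_exp (c : ℝ) {x : ℕ → ℝ}
    (hx : Tendsto (fun k : ℕ => (k : ℝ) / x k) atTop (𝓝 0)) :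
    Tendsto (fun k : ℕ => (exp 1 * k * exp (c * (k ^ 2 / x k))) ^ (k : ℝ)⁻¹) atTop (𝓝 1) := by
  have hexp : Tendsto (fun k : ℕ => exp (k : ℝ)⁻¹) atTop (𝓝 1) := by
    simpa [Function.comp_def] using (continuous_exp.tendsto 0).comp
      (tendsto_inv_atTop_zero.comp tendsto_natCast_atTop_atTop)
  have hroot : Tendsto (fun k : ℕ => (k : ℝ) ^ (k : ℝ)⁻¹) atTop (𝓝 1) := by
    simpa [one_div, Function.comp_def] using tendsto_rpow_div.comp tendsto_natCast_atTop_atTop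
  have hcorr : Tendsto (fun k : ℕ => exp (c * (k / x k))) atTop (𝓝 1) := by
    simpa [Function.comp_def] using
      (continuous_exp.tendsto 0).comp (by simpa using hx.const_mul c)
  refine ((hexp.mul hroot).mul hcorr).congr' ?_ |>.trans (by simp)
  filter_upwards [eventually_ne_atTop 0] with k hk
  rw [mul_rpow (by positivity) (exp_pos _).le, mul_rpow (exp_pos _).le (Nat.cast_nonneg k),
    exp_one_rpow, ← exp_mul]
  congr 2
  field_simp

def bellTerm (V : ℕ → ℝ) (x : ℝ) {k : ℕ} (l : Fin k → ℕ) : ℝ :=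
  ∏ i : Fin k, (x * V (i.1 + 1)) ^ (l i) /
    ((Nat.factorial (i.1 + 1) : ℝ) ^ (l i) * (Nat.factorial (l i) : ℝ))

theorem weightedBell_eq_factorial_mul_sum_bellTerm (V : ℕ → ℝ) (k : ℕ) (x : ℝ) :
    weightedBell V k x = k.factorial * ∑ l ∈ bellTuples k, bellTerm V x l :=
  rfl

theorem bellTerm_nonneg {V : ℕ → ℝ} (hV : ∀ i, 1 ≤ i → 0 ≤ V i) {x : ℝ} (hx : 0 ≤ x)
    {k : ℕ} (l : Fin k → ℕ) : 0 ≤ bellTerm V x l :=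
  Finset.prod_nonneg fun i _ =>
    div_nonneg (pow_nonneg (mul_nonneg hx (hV _ (Nat.le_add_left 1 i.1))) _) (by positivity)

theorem pow_le_weightedBell {V : ℕ → ℝ} (hV : ∀ i, 1 ≤ i → 0 ≤ V i) {x : ℝ} (hx : 0 ≤ x)
    (k : ℕ) : (x * V 1) ^ k ≤ weightedBell V k x := by
  rcases k with _ | n
  · simp [weightedBell, bellTuples]
  set l₀ : Fin (n + 1) → ℕ := Pi.single 0 (n + 1)
  have hmem : l₀ ∈ bellTuples (n + 1) := by
    simp only [bellTuples, l₀, Finset.mem_filter, Fintype.mem_piFinset, Finset.mem_range]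
    constructor
    · intro i; rw [Pi.single_apply]; split_ifs <;> omega
    · simp [Pi.single_apply]
  have hterm : bellTerm V x l₀ = (x * V 1) ^ (n + 1) / (n + 1).factorial := by
    rw [bellTerm, Fin.prod_univ_succ]
    simp [l₀]
  rw [weightedBell_eq_factorial_mul_sum_bellTerm, ← div_le_iff₀' (by positivity), ← hterm]
  exact Finset.single_le_sum (fun l _ => bellTerm_nonneg hV hx l) hmem

theorem bellTerm_mul_pow_eq (V : ℕ → ℝ) (x u : ℝ) {k : ℕ} {l : Fin k → ℕ}
    (hl : ∑ i : Fin k, (i.1 + 1) * l i = k) :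
    bellTerm V x l * u ^ k =
      ∏ i : Fin k,
        (x * V (i.1 + 1) * u ^ (i.1 + 1) / (i.1 + 1).factorial) ^ l i / (l i).factorial := by
  rw [show u ^ k = ∏ i : Fin k, u ^ ((i.1 + 1) * l i) by rw [Finset.prod_pow_eq_pow_sum, hl],
    bellTerm, ← Finset.prod_mul_distrib]
  refine Finset.prod_congr rfl fun i _ => ?_
  rw [div_pow, mul_pow, pow_mul]
  field_simp
  ring

theorem weightedBell_le_factorial_mul_exp {V : ℕ → ℝ} (hV : ∀ i, 1 ≤ i → 0 ≤ V i) {x u : ℝ}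
    (hx : 0 ≤ x) (hu : 0 < u)
    (hsum : Summable fun i : ℕ => V (i + 1) * u ^ (i + 1) / (Nat.factorial (i + 1) : ℝ))
    (k : ℕ) :
    weightedBell V k x ≤ k.factorial * u⁻¹ ^ k * exp (x * (weightEGF V u - 1)) := by
  set a : ℕ → ℝ := fun i => x * V (i + 1) * u ^ (i + 1) / (i + 1).factorial
  have ha : ∀ i, 0 ≤ a i := fun i => by have := hV (i + 1) (Nat.le_add_left 1 i); positivity
  have hterms : ∀ l ∈ bellTuples k,
      bellTerm V x l = u⁻¹ ^ k * ∏ i : Fin k, a i ^ l i / (l i).factorial := fun l hl => by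
    rw [inv_pow, eq_inv_mul_iff_mul_eq₀ (pow_ne_zero k hu.ne'), mul_comm]
    exact bellTerm_mul_pow_eq V x u (Finset.mem_filter.mp hl).2
  have hsum_a : Summable a := (hsum.mul_left x).congr fun i => by simp only [a]; ring
  have htsum_a : ∑' i, a i = x * (weightEGF V u - 1) := by
    rw [weightEGF, add_sub_cancel_left, ← tsum_mul_left]
    exact tsum_congr fun i => by simp only [a]; ring
  have hpartial : ∑ i : Fin k, a i ≤ x * (weightEGF V u - 1) := by
    rw [Fin.sum_univ_eq_sum_range a, ← htsum_a]
    exact hsum_a.sum_le_tsum _ fun i _ => ha i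
  calc weightedBell V k x
      = k.factorial * (u⁻¹ ^ k * ∑ l ∈ bellTuples k, ∏ i : Fin k, a i ^ l i / (l i).factorial) := by
        rw [weightedBell_eq_factorial_mul_sum_bellTerm, Finset.sum_congr rfl hterms,
          ← Finset.mul_sum]
    _ ≤ k.factorial * (u⁻¹ ^ k * ∑ l ∈ Fintype.piFinset (fun _ : Fin k => Finset.range (k + 1)),
          ∏ i : Fin k, a i ^ l i / (l i).factorial) := by
        gcongr
        · exact fun l _ _ => Finset.prod_nonneg fun i _ =>
            div_nonneg (pow_nonneg (ha i) _) (Nat.cast_nonneg _)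
        · exact Finset.filter_subset _ _
    _ ≤ k.factorial * (u⁻¹ ^ k * exp (x * (weightEGF V u - 1))) := by
        gcongr
        exact (sum_piFinset_prod_pow_div_factorial_le_exp (a := fun i : Fin k => a i)
          (fun i => ha i) _).trans (exp_le_exp.mpr hpartial)
    _ = _ := by ring

section WeightEGF

variable {V : ℕ → ℝ} {u u₁ : ℝ}

theorem summable_weight_of_le (hV : ∀ i, 1 ≤ i → 0 ≤ V i) (hu : 0 ≤ u) (hu₁ : u ≤ u₁)
    (hsum : Summable fun i : ℕ => V (i + 1) * u₁ ^ (i + 1) / (Nat.factorial (i + 1) : ℝ)) :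
    Summable fun i : ℕ => V (i + 1) * u ^ (i + 1) / (Nat.factorial (i + 1) : ℝ) :=
  hsum.of_nonneg_of_le (fun i => by have := hV (i + 1) (Nat.le_add_left 1 i); positivity)
    fun i => by have := hV (i + 1) (Nat.le_add_left 1 i); gcongr

theorem weightEGF_sub_one_le (hV : ∀ i, 1 ≤ i → 0 ≤ V i) (hu : 0 ≤ u) (hu₁ : u ≤ u₁)
    (hu₁_pos : 0 < u₁)
    (hsum : Summable fun i : ℕ => V (i + 1) * u₁ ^ (i + 1) / (Nat.factorial (i + 1) : ℝ)) :
    weightEGF V u - 1 ≤ V 1 * u + (u / u₁) ^ 2 * (weightEGF V u₁ - 1) := by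
  have hV' : ∀ i : ℕ, 0 ≤ V (i + 1) := fun i => hV (i + 1) (Nat.le_add_left 1 i)
  have hsum_u := summable_weight_of_le hV hu hu₁ hsum
  simp only [weightEGF, add_sub_cancel_left]
  rw [hsum_u.tsum_eq_zero_add, hsum.tsum_eq_zero_add]
  have htail : ∑' i : ℕ, V (i + 1 + 1) * u ^ (i + 1 + 1) / ((i + 1 + 1).factorial : ℝ) ≤
      (u / u₁) ^ 2 * ∑' i : ℕ, V (i + 1 + 1) * u₁ ^ (i + 1 + 1) / ((i + 1 + 1).factorial : ℝ) := by
    rw [← tsum_mul_left]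
    refine ((summable_nat_add_iff 1).mpr hsum_u).tsum_le_tsum (fun i => ?_)
      (((summable_nat_add_iff 1).mpr hsum).mul_left _)
    have hpow : u ^ (i + 1 + 1) ≤ (u / u₁) ^ 2 * u₁ ^ (i + 1 + 1) :=
      calc u ^ (i + 1 + 1) = u ^ 2 * u ^ i := by ring
        _ ≤ u ^ 2 * u₁ ^ i := by gcongr
        _ = (u / u₁) ^ 2 * u₁ ^ (i + 1 + 1) := by field_simp; ring
    have := hV' (i + 1)
    calc _ ≤ V (i + 1 + 1) * ((u / u₁) ^ 2 * u₁ ^ (i + 1 + 1)) / ((i + 1 + 1).factorial : ℝ) := by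
          gcongr
      _ = _ := by ring
  have h0 : 0 ≤ V (0 + 1) * u₁ ^ (0 + 1) / ((0 + 1).factorial : ℝ) := by
    have := hV' 0; positivity
  simp only [zero_add, pow_one, Nat.factorial_one, Nat.cast_one, div_one] at htail h0 ⊢
  linarith [mul_nonneg (sq_nonneg (u / u₁)) h0]

end WeightEGF

theorem weightedBell_le_pow_mul {V : ℕ → ℝ} (hV : ∀ i, 1 ≤ i → 0 ≤ V i) (hV1 : 0 < V 1)
    {u₁ : ℝ} (hu₁ : 0 < u₁)
    (hsum : Summable fun i : ℕ => V (i + 1) * u₁ ^ (i + 1) / (Nat.factorial (i + 1) : ℝ))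
    {k : ℕ} (hk : k ≠ 0) {x : ℝ} (hx : 0 < x) (hku : k / (x * V 1) ≤ u₁) :
    weightedBell V k x ≤
      (x * V 1) ^ k * (exp 1 * k * exp ((weightEGF V u₁ - 1) / (V 1 * u₁) ^ 2 * (k ^ 2 / x))) := by
  set u := (k : ℝ) / (x * V 1) with hu_def
  have hu : 0 < u := by positivity
  have hexponent : x * (V 1 * u + (u / u₁) ^ 2 * (weightEGF V u₁ - 1)) =
      k + (weightEGF V u₁ - 1) / (V 1 * u₁) ^ 2 * (k ^ 2 / x) := by
    rw [hu_def]; field_simp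
  calc weightedBell V k x ≤ k.factorial * u⁻¹ ^ k * exp (x * (weightEGF V u - 1)) :=
        weightedBell_le_factorial_mul_exp hV hx.le hu (summable_weight_of_le hV hu.le hku hsum) k
    _ ≤ exp 1 * k * (k / exp 1) ^ k * u⁻¹ ^ k *
          exp (x * (V 1 * u + (u / u₁) ^ 2 * (weightEGF V u₁ - 1))) := by
        gcongr
        · exact factorial_le_exp_one_mul_mul_div_exp_one_pow hk
        · exact weightEGF_sub_one_le hV hu.le hku hu₁ hsum
    _ = _ := by
        rw [hexponent, exp_add, ← exp_one_pow, hu_def]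
        field_simp
        rw [← mul_pow, ← mul_pow]
        field_simp

/-- Theorem 1.1, part B, first case of (1.11): if `V_1 > 0` and
`x_k / k → ∞`, then `(M_k(x_k))^{1/k} / (x_k V_1) → 1`. -/
theorem stmt4 (V : ℕ → ℝ) (hVpos : ∀ i : ℕ, 1 ≤ i → 0 ≤ V i) (hV1 : 0 < V 1)
    (u0 : ℝ≥0∞) (hu0 : 0 < u0) (hH : HFinite V u0)
    (x : ℕ → ℝ) (hx : ∀ k, 0 < x k)
    (hxinf : Tendsto (fun k : ℕ => x k / (k : ℝ)) atTop atTop) :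
    Tendsto (fun k : ℕ => (weightedBell V k (x k)) ^ ((k : ℝ)⁻¹) / (x k * V 1))
      atTop (nhds 1) := by
  obtain ⟨u₁, -, hu₁, hu₁u0⟩ := ENNReal.lt_iff_exists_real_btwn.mp hu0
  rw [ENNReal.ofReal_pos] at hu₁
  have hsum := hH u₁ hu₁.le hu₁u0
  have hk_div_x : Tendsto (fun k : ℕ => (k : ℝ) / x k) atTop (𝓝 0) := by
    simpa [Pi.inv_def, inv_div] using hxinf.inv_tendsto_atTop
  have hlarge : ∀ᶠ k : ℕ in atTop, k ≠ 0 ∧ (k : ℝ) / (x k * V 1) ≤ u₁ := by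
    have h := (hk_div_x.div_const (V 1)).eventually (eventually_le_nhds (by simpa using hu₁))
    filter_upwards [eventually_ne_atTop 0, h] with k hk hku
    exact ⟨hk, by rwa [← div_div]⟩
  refine tendsto_of_tendsto_of_tendsto_of_le_of_le' tendsto_const_nhds
    (tendsto_rpow_inv_exp_one_mul_mul_exp ((weightEGF V u₁ - 1) / (V 1 * u₁) ^ 2) hk_div_x)
    ?_ ?_ <;> filter_upwards [hlarge] with k ⟨hk, hku⟩
  · exact one_le_rpow_inv_div hk (mul_pos (hx k) hV1) (pow_le_weightedBell hVpos (hx k).le k)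
  · exact rpow_inv_div_le hk (mul_pos (hx k) hV1)
      ((pow_nonneg (mul_pos (hx k) hV1).le k).trans (pow_le_weightedBell hVpos (hx k).le k))
      (weightedBell_le_pow_mul hVpos hV1 hu₁ hsum hk (hx k) hku)

end
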